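/- arXiv:1403.7582 — 2 statements merged into one kernel-verified Lean document; each statement's English description precedes it below -/
import Mathlib

section
/- Let (R, 𝔪) be a local ring, v a ℤ-valued valuation on R, and write ord_v(I) for the infimum of v over an ideal I. Suppose ideals I, J ⊆ R and an integer l satisfy I + 𝔪^l = J + 𝔪^l and ord_v(I) < l · ord_v(𝔪). Then ord_v(I) = ord_v(J). -/
/-!
Split `x ∈ J ⊆ I + 𝔪^l` as `x = i + y` with `y ∈ 𝔪^l`. Since `v ≥ l · ord_v 𝔪 > ord_v I` on
`𝔪^l`, the ultrametric inequality gives `v x ≥ ord_v I`; symmetrically every element of `I` has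
value at least `min (ord_v J) (l · ord_v 𝔪)`, and this minimum must be `ord_v J` because it is
at most `ord_v I`. The case `l = 0` is excluded because `ord_v` of an ideal is never negative:
an element of negative value would have powers of arbitrarily negative value.
-/

lemma WithTop.natCast_mul_eq_nsmul (n : ℕ) (a : WithTop ℤ) : (n : WithTop ℤ) * a = n • a := by
  induction a with
  | top =>
    cases n with
    | zero => simp
    | succ n => rw [WithTop.mul_top (by exact_mod_cast n.succ_ne_zero), succ_nsmul, add_top]
  | coe a =>
    rw [← WithTop.coe_natCast, ← WithTop.coe_mul, ← WithTop.coe_nsmul, nsmul_eq_mul]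

section

variable {R : Type*} [CommRing R] {v : R → WithTop ℤ}

lemma map_pow_succ_eq_nsmul (hmul : ∀ x y, v (x * y) = v x + v y) (x : R) (n : ℕ) :
    v (x ^ (n + 1)) = (n + 1) • v x := by
  induction n with
  | zero => simp
  | succ n ih => rw [pow_succ, hmul, ih, succ_nsmul _ (n + 1)]

lemma nonneg_of_bddBelow_image_ideal (hmul : ∀ x y, v (x * y) = v x + v y) {K : Ideal R}
    (hK : BddBelow (v '' K)) {x : R} (hx : x ∈ K) : 0 ≤ v x := by
  obtain ⟨m, hm⟩ := hK
  by_contra! hneg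
  lift v x to ℤ using (hneg.trans WithTop.top_pos).ne with a ha
  have ha0 : a < 0 := by exact_mod_cast hneg
  have hpow (n : ℕ) : m ≤ ((n + 1) * a : ℤ) := by
    have := hm ⟨_, K.pow_mem_of_mem hx (n + 1) n.succ_pos, map_pow_succ_eq_nsmul hmul x n⟩
    rwa [← ha, ← WithTop.coe_nsmul, nsmul_eq_mul] at this
  lift m to ℤ using ((hpow 0).trans_lt (WithTop.coe_lt_top _)).ne with b
  have hb : b ≤ (b.natAbs + 1) * a := by exact_mod_cast hpow b.natAbs
  have : ((b.natAbs : ℤ) + 1) * a ≤ -((b.natAbs : ℤ) + 1) := by nlinarith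
  omega

lemma nonneg_of_isGLB_image_ideal (hmul : ∀ x y, v (x * y) = v x + v y) {K : Ideal R}
    {m : WithTop ℤ} (hm : IsGLB (v '' K) m) : 0 ≤ m :=
  hm.2 fun _ ⟨_, hx, hvx⟩ => hvx ▸ nonneg_of_bddBelow_image_ideal hmul ⟨m, hm.1⟩ hx

lemma nsmul_mem_lowerBounds_image_pow (hmul : ∀ x y, v (x * y) = v x + v y)
    (hadd : ∀ x y, min (v x) (v y) ≤ v (x + y)) {K : Ideal R} {m : WithTop ℤ}
    (hm : m ∈ lowerBounds (v '' K)) {n : ℕ} (hn : n ≠ 0) :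
    n • m ∈ lowerBounds (v '' ↑(K ^ n)) := by
  induction n, Nat.one_le_iff_ne_zero.mpr hn using Nat.le_induction with
  | base => simpa using hm
  | succ n hn1 ih =>
    rintro _ ⟨x, hx, rfl⟩
    rw [pow_succ] at hx
    refine Submodule.mul_induction_on hx (fun a ha b hb => ?_) fun a b ha hb =>
      (le_min ha hb).trans (hadd a b)
    rw [hmul, succ_nsmul]
    exact add_le_add (ih (Nat.one_le_iff_ne_zero.mp hn1) ⟨a, ha, rfl⟩) (hm ⟨b, hb, rfl⟩)

lemma min_mem_lowerBounds_image_of_le_sup (hadd : ∀ x y, min (v x) (v y) ≤ v (x + y))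
    {I J M : Ideal R} (hJ : J ≤ I ⊔ M) {a c : WithTop ℤ} (ha : a ∈ lowerBounds (v '' I))
    (hc : c ∈ lowerBounds (v '' M)) : min a c ∈ lowerBounds (v '' J) := by
  rintro _ ⟨x, hx, rfl⟩
  obtain ⟨i, hi, y, hy, rfl⟩ := Submodule.mem_sup.mp (hJ hx)
  exact (min_le_min (ha ⟨i, hi, rfl⟩) (hc ⟨y, hy, rfl⟩)).trans (hadd i y)

end

/-- Over a local ring, if `I + 𝔪^l = J + 𝔪^l` and `ord_v I < l · ord_v 𝔪`, then
`ord_v I = ord_v J`, where `ord_v` is the infimum of a valuation `v` over an ideal. -/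
theorem ord_eq_of_adic_approx {R : Type*} [CommRing R] [IsLocalRing R]
    (v : R → WithTop ℤ)
    (hmul : ∀ x y, v (x * y) = v x + v y)
    (hadd : ∀ x y, min (v x) (v y) ≤ v (x + y))
    (l : ℕ) (I J : Ideal R)
    (mI mJ mm : WithTop ℤ)
    (hmI : IsGLB (v '' (I : Set R)) mI)
    (hmJ : IsGLB (v '' (J : Set R)) mJ)
    (hmm : IsGLB (v '' (IsLocalRing.maximalIdeal R : Set R)) mm)
    (heq : I + (IsLocalRing.maximalIdeal R) ^ l = J + (IsLocalRing.maximalIdeal R) ^ l)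
    (hlt : mI < (l : WithTop ℤ) * mm) :
    mI = mJ := by
  have hl : l ≠ 0 := by
    rintro rfl
    exact (nonneg_of_isGLB_image_ideal hmul hmI).not_gt (by simpa using hlt)
  rw [WithTop.natCast_mul_eq_nsmul] at hlt
  have hpow := nsmul_mem_lowerBounds_image_pow hmul hadd hmm.1 hl
  have hJI : J ≤ I ⊔ IsLocalRing.maximalIdeal R ^ l := by
    rw [← Submodule.add_eq_sup, heq]
    exact le_sup_left
  have hIJ : I ≤ J ⊔ IsLocalRing.maximalIdeal R ^ l := by
    rw [← Submodule.add_eq_sup, ← heq]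
    exact le_sup_left
  apply le_antisymm
  · simpa [min_eq_left hlt.le] using
      hmJ.2 (min_mem_lowerBounds_image_of_le_sup hadd hJI hmI.1 hpow)
  · have := hmI.2 (min_mem_lowerBounds_image_of_le_sup hadd hIJ hmJ.1 hpow)
    exact (min_le_iff.mp this).resolve_right hlt.not_ge
end

section
/- Let (R, 𝔪) be a Noetherian local ring that is complete with respect to the 𝔪-adic topology. Suppose given, for each integer l ≥ l₀, an ideal I_l of R such that 𝔪^l ⊆ I_l and I_l = I_{l+1} + 𝔪^l. Then the ideal I := ⋂_{l ≥ l₀} I_l satisfies I + 𝔪^l = I_l for every l ≥ l₀. -/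
/-!
Starting from `x ∈ I_l`, the relation `I_n = I_{n+1} + 𝔪^n` lets one correct `x` step by step
into elements `x_n ∈ I_n` with `x_n ≡ x_{n+1} mod 𝔪^n`. Completeness provides a limit `L`,
which lies in every `I_n` because `𝔪^n ⊆ I_n`, and `x ≡ L mod 𝔪^l`.
-/

section

variable {R M : Type*} [CommRing R] [AddCommGroup M] [Module R M]

theorem smodEq_of_le_of_smodEq_succ {F : ℕ → Submodule R M} (hF : Antitone F) {f : ℕ → M}
    (hf : ∀ n, f n ≡ f (n + 1) [SMOD F n]) {m n : ℕ} (hmn : m ≤ n) : f m ≡ f n [SMOD F m] := by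
  induction n, hmn using Nat.le_induction with
  | base => rfl
  | succ k hmk ih => exact ih.trans ((hf k).mono (hF hmk))

theorem IsPrecomplete.exists_smodEq_of_smodEq_succ {J : Ideal R} [IsPrecomplete J M] {f : ℕ → M}
    (hf : ∀ n, f n ≡ f (n + 1) [SMOD (J ^ n • ⊤ : Submodule R M)]) :
    ∃ L : M, ∀ n, f n ≡ L [SMOD (J ^ n • ⊤ : Submodule R M)] :=
  IsPrecomplete.prec ‹_› fun hmn =>
    smodEq_of_le_of_smodEq_succ (fun _ _ h => Submodule.pow_smul_top_le J M h) hf hmn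

theorem exists_seq_mem_of_le_sup {N F : ℕ → Submodule R M} (hN : ∀ n, N n ≤ N (n + 1) ⊔ F n)
    {x : M} (hx : x ∈ N 0) :
    ∃ f : ℕ → M, f 0 = x ∧ ∀ n, f n ∈ N n ∧ f n ≡ f (n + 1) [SMOD F n] := by
  have step : ∀ n, ∀ y ∈ N n, ∃ z ∈ N (n + 1), y ≡ z [SMOD F n] := by
    intro n y hy
    obtain ⟨z, hz, w, hw, rfl⟩ := Submodule.mem_sup.mp (hN n hy)
    exact ⟨z, hz, SModEq.sub_mem.mpr (by simpa using hw)⟩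
  choose! next next_mem smodEq_next using step
  let f : ℕ → M := fun n => Nat.rec x (fun k y => next k y) n
  have f_mem : ∀ n, f n ∈ N n := fun n => by
    induction n with
    | zero => exact hx
    | succ n ih => exact next_mem n _ ih
  exact ⟨f, rfl, fun n => ⟨f_mem n, smodEq_next n _ (f_mem n)⟩⟩

theorem iInf_sup_pow_smul_top_eq {J : Ideal R} [IsPrecomplete J M] {N : ℕ → Submodule R M}
    {l₀ : ℕ} (hJN : ∀ n, l₀ ≤ n → J ^ n • ⊤ ≤ N n) (hN : ∀ n, l₀ ≤ n → N n = N (n + 1) ⊔ J ^ n • ⊤)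
    {l : ℕ} (hl : l₀ ≤ l) : (⨅ (n : ℕ) (_ : l₀ ≤ n), N n) ⊔ J ^ l • ⊤ = N l := by
  refine le_antisymm (sup_le (iInf₂_le l hl) (hJN l hl)) fun x hx => ?_
  have N_anti : AntitoneOn N {n | l₀ ≤ n} :=
    antitoneOn_nat_Ici_of_succ_le fun n hn => (hN n hn).ge.trans' le_sup_left
  have J_anti : Antitone fun k => (J ^ (l + k) • ⊤ : Submodule R M) :=
    fun _ _ h => Submodule.pow_smul_top_le J M (by omega)
  obtain ⟨f, rfl, hf⟩ := exists_seq_mem_of_le_sup (N := fun k => N (l + k))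
    (fun k => (hN (l + k) (by omega)).le) hx
  obtain ⟨L, hL⟩ := IsPrecomplete.exists_smodEq_of_smodEq_succ (J := J) (f := f) fun k =>
    (hf k).2.mono (Submodule.pow_smul_top_le J M (by omega))
  have L_mem : L ∈ ⨅ (n : ℕ) (_ : l₀ ≤ n), N n := by
    simp only [Submodule.mem_iInf]
    intro n hn
    have hfn : f n ∈ N n := N_anti hn (show l₀ ≤ l + n by omega) (by omega) (hf n).1
    simpa using sub_mem hfn (hJN n hn (SModEq.sub_mem.mp (hL n)))
  have smodEq_L : f 0 ≡ L [SMOD (J ^ l • ⊤ : Submodule R M)] :=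
    (smodEq_of_le_of_smodEq_succ J_anti (fun k => (hf k).2) (Nat.zero_le l)).trans (hL l)
  rw [← add_sub_cancel L (f 0)]
  exact Submodule.add_mem_sup L_mem (SModEq.sub_mem.mp smodEq_L)

end

theorem limit_ideal_of_adic_approximations_general {R : Type*} [CommRing R]
    [IsLocalRing R] [IsAdicComplete (IsLocalRing.maximalIdeal R) R]
    (l₀ : ℕ) (I : ℕ → Ideal R)
    (h1 : ∀ l, l₀ ≤ l → (IsLocalRing.maximalIdeal R) ^ l ≤ I l)
    (h2 : ∀ l, l₀ ≤ l → I l = I (l + 1) + (IsLocalRing.maximalIdeal R) ^ l) :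
    ∀ l, l₀ ≤ l →
      (⨅ (l' : ℕ) (_ : l₀ ≤ l'), I l') + (IsLocalRing.maximalIdeal R) ^ l = I l := by
  intro l hl
  simpa only [Ideal.smul_eq_mul, Ideal.mul_top, Submodule.add_eq_sup] using
    iInf_sup_pow_smul_top_eq (J := IsLocalRing.maximalIdeal R) (N := I)
      (by simpa only [Ideal.smul_eq_mul, Ideal.mul_top] using h1)
      (by simpa only [Ideal.smul_eq_mul, Ideal.mul_top, Submodule.add_eq_sup] using h2) hl

/-- Let `(R, 𝔪)` be a Noetherian local ring, complete for the `𝔪`-adic topology. Given a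
compatible system of ideals `I_l` with `𝔪^l ⊆ I_l` and `I_l = I_{l+1} + 𝔪^l` for `l ≥ l₀`,
the ideal `I = ⋂_{l ≥ l₀} I_l` satisfies `I + 𝔪^l = I_l` for every `l ≥ l₀`. -/
theorem limit_ideal_of_adic_approximations {R : Type*} [CommRing R] [IsNoetherianRing R]
    [IsLocalRing R] [IsAdicComplete (IsLocalRing.maximalIdeal R) R]
    (l₀ : ℕ) (I : ℕ → Ideal R)
    (h1 : ∀ l, l₀ ≤ l → (IsLocalRing.maximalIdeal R) ^ l ≤ I l)
    (h2 : ∀ l, l₀ ≤ l → I l = I (l + 1) + (IsLocalRing.maximalIdeal R) ^ l) :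
    ∀ l, l₀ ≤ l →
      (⨅ (l' : ℕ) (_ : l₀ ≤ l'), I l') + (IsLocalRing.maximalIdeal R) ^ l = I l :=
  limit_ideal_of_adic_approximations_general l₀ I h1 h2
end
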